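/- Let L be symmetric PSD with one-dimensional kernel spanned by v₀, and 𝓛' the block circulant supra-Laplacian with diagonal blocks L + 2ωI and off-diagonal/corner blocks −ωI, with 4ω < λ₂(L). Then every eigenvector of 𝓛' with eigenvalue < λ₂(L) lies in the T-dimensional subspace {ψ ∈ ℝ^{NT} : ψ_j = α_j v₀ for some scalars α_j, j = 1, ..., T}, i.e., each of its blocks is a scalar multiple of v₀. -/

import Mathlib

open Matrix Real

def blockCirc {T N : ℕ} [NeZero T] (L W : Matrix (Fin N) (Fin N) ℝ) :
    Matrix (Fin T × Fin N) (Fin T × Fin N) ℝ :=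
  fun p q =>
    if p.1 = q.1 then L p.2 q.2
    else if q.1 = p.1 + 1 ∨ q.1 = p.1 - 1 then W p.2 q.2 else 0

/-- The eigenvalues of a Hermitian real matrix, sorted in nondecreasing order:
`sortedEig hM j` is the `j`-th smallest eigenvalue of `M` (counted with multiplicity). -/
noncomputable def sortedEig {n : ℕ} {M : Matrix (Fin n) (Fin n) ℝ} (hM : M.IsHermitian) :
    Fin n → ℝ :=
  hM.eigenvalues ∘ Tuple.sort hM.eigenvalues

/-!
Write each block of an eigenvector as `ψ_j = w_j + α_j v₀` with `w_j ⊥ v₀`. Since `L v₀ = 0`,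
pairing the `j`-th block of `𝓛' ψ = μ ψ` with `w_j` and summing over `j` gives
`∑ ⟪w_j, L w_j⟫ + ω ∑ (2‖w_j‖² - ⟪w_j, w_{j+1}⟫ - ⟪w_j, w_{j-1}⟫) = μ ∑ ‖w_j‖²`.
The coupling sum is nonnegative by `2⟪a, b⟫ ≤ ‖a‖² + ‖b‖²` and shift invariance, and on `v₀^⊥`
the Rayleigh quotient of `L` is at least `λ₂(L)`, so `λ₂(L) ∑ ‖w_j‖² ≤ μ ∑ ‖w_j‖²`.
As `μ < λ₂(L)`, every `w_j` vanishes.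
-/

namespace Matrix.IsHermitian

section
variable {n : Type*} [Fintype n] [DecidableEq n] {A : Matrix n n ℝ} (hA : A.IsHermitian)

lemma dotProduct_eq_sum_eigenvectorBasis (x y : n → ℝ) :
    x ⬝ᵥ y = ∑ i, (hA.eigenvectorBasis i ⬝ᵥ x) * (hA.eigenvectorBasis i ⬝ᵥ y) := by
  have h := hA.eigenvectorBasis.sum_inner_mul_inner (WithLp.toLp 2 x) (WithLp.toLp 2 y)
  simp only [EuclideanSpace.inner_eq_star_dotProduct, star_trivial] at h
  rw [dotProduct_comm, ← h]
  simp only [dotProduct_comm y]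

lemma dotProduct_mulVec_eq_sum_eigenvalues (x : n → ℝ) :
    x ⬝ᵥ (A *ᵥ x) = ∑ i, hA.eigenvalues i * (hA.eigenvectorBasis i ⬝ᵥ x) ^ 2 := by
  rw [hA.dotProduct_eq_sum_eigenvectorBasis]
  refine Finset.sum_congr rfl fun i _ => ?_
  rw [dotProduct_mulVec, ← mulVec_transpose, show Aᵀ = A by simpa using hA.eq,
    hA.mulVec_eigenvectorBasis, smul_dotProduct, smul_eq_mul]
  ring

end

lemma sortedEig_one_le_eigenvalues {m : ℕ} {A : Matrix (Fin m) (Fin m) ℝ} (hA : A.IsHermitian)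
    (h1 : 1 < m) {i : Fin m} (hi : i ≠ Tuple.sort hA.eigenvalues ⟨0, by omega⟩) :
    sortedEig hA ⟨1, h1⟩ ≤ hA.eigenvalues i := by
  have hpos : (⟨1, h1⟩ : Fin m) ≤ (Tuple.sort hA.eigenvalues).symm i := by
    rw [Fin.le_def, Nat.one_le_iff_ne_zero]
    intro h
    exact hi (by rw [← Fin.ext h (b := ⟨0, by omega⟩), Equiv.apply_symm_apply])
  simpa [sortedEig] using Tuple.monotone_sort hA.eigenvalues hpos

lemma sortedEig_one_mul_dotProduct_self_le {m : ℕ} {A : Matrix (Fin m) (Fin m) ℝ}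
    (hA : A.IsHermitian) (h1 : 1 < m) (x : Fin m → ℝ)
    (hx : hA.eigenvectorBasis (Tuple.sort hA.eigenvalues ⟨0, by omega⟩) ⬝ᵥ x = 0) :
    sortedEig hA ⟨1, h1⟩ * (x ⬝ᵥ x) ≤ x ⬝ᵥ (A *ᵥ x) := by
  rw [hA.dotProduct_mulVec_eq_sum_eigenvalues, hA.dotProduct_eq_sum_eigenvectorBasis,
    Finset.mul_sum]
  refine Finset.sum_le_sum fun i _ => ?_
  by_cases hi : i = Tuple.sort hA.eigenvalues ⟨0, by omega⟩
  · simp [hi, hx]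
  · rw [← sq]
    exact mul_le_mul_of_nonneg_right (sortedEig_one_le_eigenvalues hA h1 hi) (sq_nonneg _)

end Matrix.IsHermitian

lemma Matrix.mulVec_eq_zero_of_ker_toLin'_eq_span {n : Type*} [Fintype n] [DecidableEq n]
    {A : Matrix n n ℝ} {v : n → ℝ} (hker : LinearMap.ker A.toLin' = Submodule.span ℝ {v}) :
    A *ᵥ v = 0 := by
  simpa using (hker ▸ Submodule.mem_span_singleton_self v : v ∈ LinearMap.ker A.toLin')

namespace Matrix.PosSemidef

lemma eigenvalues_sort_zero_eq_zero {m : ℕ} {A : Matrix (Fin m) (Fin m) ℝ} (hA : A.PosSemidef)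
    (h0 : 0 < m) (hdet : A.det = 0) :
    hA.isHermitian.eigenvalues (Tuple.sort hA.isHermitian.eigenvalues ⟨0, h0⟩) = 0 := by
  have hzero : (0 : ℝ) ∈ spectrum ℝ A := by
    rw [spectrum.zero_mem_iff, isUnit_iff_isUnit_det, hdet]
    exact not_isUnit_zero
  obtain ⟨i, hi⟩ := hA.isHermitian.spectrum_real_eq_range_eigenvalues ▸ hzero
  refine le_antisymm ?_ (hA.eigenvalues_nonneg _)
  have hle : (⟨0, h0⟩ : Fin m) ≤ (Tuple.sort hA.isHermitian.eigenvalues).symm i :=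
    Fin.le_def.mpr (Nat.zero_le _)
  simpa [hi] using Tuple.monotone_sort hA.isHermitian.eigenvalues hle

lemma sortedEig_one_mul_dotProduct_self_le {m : ℕ} {A : Matrix (Fin m) (Fin m) ℝ}
    (hA : A.PosSemidef) (h1 : 1 < m) {v : Fin m → ℝ} (hv : v ≠ 0)
    (hker : LinearMap.ker A.toLin' = Submodule.span ℝ {v}) (x : Fin m → ℝ) (hx : v ⬝ᵥ x = 0) :
    sortedEig hA.isHermitian ⟨1, h1⟩ * (x ⬝ᵥ x) ≤ x ⬝ᵥ (A *ᵥ x) := by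
  set e := hA.isHermitian.eigenvectorBasis (Tuple.sort hA.isHermitian.eigenvalues ⟨0, by omega⟩)
  have he : e.ofLp ∈ LinearMap.ker A.toLin' := by
    rw [LinearMap.mem_ker, toLin'_apply, hA.isHermitian.mulVec_eigenvectorBasis,
      hA.eigenvalues_sort_zero_eq_zero (by omega)
        (exists_mulVec_eq_zero_iff.mp ⟨v, hv, mulVec_eq_zero_of_ker_toLin'_eq_span hker⟩),
      zero_smul]
  obtain ⟨c, hc⟩ := Submodule.mem_span_singleton.mp (hker ▸ he)
  refine hA.isHermitian.sortedEig_one_mul_dotProduct_self_le h1 x ?_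
  rw [← hc, smul_dotProduct, hx, smul_zero]

end Matrix.PosSemidef

namespace Fin

variable {T : ℕ} [NeZero T]

lemma one_ne_zero_of_two_le (hT : 2 ≤ T) : (1 : Fin T) ≠ 0 := by
  simp only [ne_eq, Fin.ext_iff, Fin.coe_ofNat_eq_mod, Nat.zero_mod, Nat.one_mod_eq_zero_iff]
  omega

lemma two_ne_zero_of_three_le (hT : 3 ≤ T) : (1 + 1 : Fin T) ≠ 0 := by
  simp only [ne_eq, Fin.ext_iff, Fin.val_add, Fin.coe_ofNat_eq_mod, Nat.add_mod_mod,
    Nat.mod_add_mod, Nat.reduceAdd, Nat.zero_mod]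
  rw [Nat.mod_eq_of_lt (by omega)]
  omega

lemma ne_add_one (hT : 2 ≤ T) (j : Fin T) : j ≠ j + 1 := fun h =>
  one_ne_zero_of_two_le hT (add_eq_left.mp h.symm)

lemma ne_sub_one (hT : 2 ≤ T) (j : Fin T) : j ≠ j - 1 := fun h =>
  one_ne_zero_of_two_le hT (sub_eq_self.mp h.symm)

lemma add_one_ne_sub_one (hT : 3 ≤ T) (j : Fin T) : j + 1 ≠ j - 1 := fun h =>
  two_ne_zero_of_three_le hT (by rw [← add_eq_left (a := j), ← add_assoc, h, sub_add_cancel])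

end Fin

section blockCirc
variable {T N : ℕ} [NeZero T] (hT : 3 ≤ T) (L W : Matrix (Fin N) (Fin N) ℝ)
include hT

lemma blockCirc_apply_of_three_le (j k : Fin T) (a b : Fin N) :
    blockCirc L W (j, a) (k, b) =
      (if k = j then L a b else 0) + (if k = j + 1 then W a b else 0) +
        (if k = j - 1 then W a b else 0) := by
  have h1 := Fin.ne_add_one (by omega) j
  have h2 := Fin.ne_sub_one (by omega) j
  have h3 := Fin.add_one_ne_sub_one hT j
  by_cases hj : k = j
  · simp only [blockCirc, hj, h1, h2, if_true, if_false, add_zero]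
  by_cases hp : k = j + 1
  · simp only [blockCirc, hp, h1, h1.symm, h3, if_true, if_false, true_or, zero_add, add_zero]
  by_cases hm : k = j - 1
  · simp only [blockCirc, hm, h2, h2.symm, h3.symm, if_true, if_false, or_true, zero_add]
  simp only [blockCirc, Ne.symm hj, hj, hp, hm, if_false, or_self, add_zero]

lemma blockCirc_mulVec_curry (ψ : Fin T × Fin N → ℝ) (j : Fin T) :
    Function.curry (blockCirc L W *ᵥ ψ) j =
      L *ᵥ Function.curry ψ j + W *ᵥ Function.curry ψ (j + 1) + W *ᵥ Function.curry ψ (j - 1) := by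
  ext a
  simp [mulVec, dotProduct, Fintype.sum_prod_type, blockCirc_apply_of_three_le hT, add_mul,
    Finset.sum_add_distrib, ite_mul]

end blockCirc

section CoupledBlocks
variable {ι n : Type*} [Fintype ι] [Fintype n]

lemma two_mul_dotProduct_le (x y : n → ℝ) : 2 * (x ⬝ᵥ y) ≤ x ⬝ᵥ x + y ⬝ᵥ y := by
  simp only [dotProduct, Finset.mul_sum, ← Finset.sum_add_distrib]
  exact Finset.sum_le_sum fun a _ => by nlinarith [sq_nonneg (x a - y a)]

lemma sum_dotProduct_perm_le (σ : Equiv.Perm ι) (w : ι → n → ℝ) :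
    ∑ j, w j ⬝ᵥ w (σ j) ≤ ∑ j, w j ⬝ᵥ w j := by
  have h := Finset.sum_le_sum fun j (_ : j ∈ Finset.univ) => two_mul_dotProduct_le (w j) (w (σ j))
  rw [Finset.sum_add_distrib, Equiv.sum_comp σ fun j => w j ⬝ᵥ w j, ← Finset.mul_sum] at h
  linarith

lemma exists_dotProduct_eq_zero_and_eq_add_smul {v : n → ℝ} (hv : v ≠ 0) (x : n → ℝ) :
    ∃ (α : ℝ) (w : n → ℝ), v ⬝ᵥ w = 0 ∧ x = w + α • v := by
  have hvv : v ⬝ᵥ v ≠ 0 := dotProduct_self_eq_zero.not.mpr hv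
  refine ⟨(v ⬝ᵥ x) / (v ⬝ᵥ v), x - ((v ⬝ᵥ x) / (v ⬝ᵥ v)) • v, ?_, (sub_add_cancel _ _).symm⟩
  rw [dotProduct_sub, dotProduct_smul, smul_eq_mul, div_mul_cancel₀ _ hvv, sub_self]

theorem exists_eq_smul_of_eigen_lt_gap (σ τ : Equiv.Perm ι) (L : Matrix n n ℝ) {v : n → ℝ}
    (hv : v ≠ 0) (hLv : L *ᵥ v = 0) {lam : ℝ}
    (hgap : ∀ y, v ⬝ᵥ y = 0 → lam * (y ⬝ᵥ y) ≤ y ⬝ᵥ (L *ᵥ y)) {ω μ : ℝ} (hω : 0 ≤ ω)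
    (hμ : μ < lam) (x : ι → n → ℝ)
    (hx : ∀ j, L *ᵥ x j + (2 * ω) • x j - ω • x (σ j) - ω • x (τ j) = μ • x j) (j : ι) :
    ∃ α : ℝ, x j = α • v := by
  choose α w hw hxw using fun j => exists_dotProduct_eq_zero_and_eq_add_smul hv (x j)
  obtain rfl : x = fun j => w j + α j • v := funext hxw
  have hblock : ∀ j, w j ⬝ᵥ (L *ᵥ w j) + ω * (2 * (w j ⬝ᵥ w j) - w j ⬝ᵥ w (σ j) -
      w j ⬝ᵥ w (τ j)) = μ * (w j ⬝ᵥ w j) := by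
    intro j
    have h := congrArg (w j ⬝ᵥ ·) (hx j)
    simp only [mulVec_add, mulVec_smul, hLv, smul_zero, add_zero, dotProduct_add, dotProduct_sub,
      dotProduct_smul, smul_eq_mul, dotProduct_comm (w j) v, hw] at h
    linarith
  set S := ∑ j, w j ⬝ᵥ w j
  have hsum : ∑ j, w j ⬝ᵥ (L *ᵥ w j) + ω * (2 * S - ∑ j, w j ⬝ᵥ w (σ j) -
      ∑ j, w j ⬝ᵥ w (τ j)) = μ * S := by
    simp only [S, Finset.mul_sum, ← Finset.sum_sub_distrib, ← Finset.sum_add_distrib, hblock]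
  have hgapS : lam * S ≤ ∑ j, w j ⬝ᵥ (L *ᵥ w j) := by
    rw [Finset.mul_sum]
    exact Finset.sum_le_sum fun j _ => hgap (w j) (hw j)
  have hσ := mul_le_mul_of_nonneg_left (sum_dotProduct_perm_le σ w) hω
  have hτ := mul_le_mul_of_nonneg_left (sum_dotProduct_perm_le τ w) hω
  have hle : lam * S ≤ μ * S := by linarith
  have hself : ∀ k, 0 ≤ w k ⬝ᵥ w k := fun k => Finset.sum_nonneg fun a _ => mul_self_nonneg _
  have hS : S = 0 := le_antisymm (by nlinarith) (Finset.sum_nonneg fun k _ => hself k)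
  have hw0 : w j = 0 := dotProduct_self_eq_zero.mp <|
    (Finset.sum_eq_zero_iff_of_nonneg fun k _ => hself k).mp hS j (Finset.mem_univ j)
  exact ⟨α j, by simp [hw0]⟩

end CoupledBlocks

theorem stmt18 {T N : ℕ} [NeZero T] (hT : 3 ≤ T) (hN : 2 ≤ N)
    (L : Matrix (Fin N) (Fin N) ℝ) (hL : L.PosSemidef) (hLherm : L.IsHermitian)
    (v0 : Fin N → ℝ) (hv0 : v0 ≠ 0)
    (hker : LinearMap.ker (Matrix.toLin' L) = Submodule.span ℝ {v0})
    (ω : ℝ) (hω : 0 < ω)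
    (Lsupra : Matrix (Fin T × Fin N) (Fin T × Fin N) ℝ)
    (hLsupra : Lsupra = blockCirc (T := T) (L + (2 * ω) • 1) (-(ω • 1))) :
    ∀ (ψ : Fin T × Fin N → ℝ) (μ : ℝ),
      Lsupra.mulVec ψ = μ • ψ → ψ ≠ 0 → μ < sortedEig hLherm ⟨1, by omega⟩ →
      ∀ j : Fin T, ∃ α : ℝ, (fun a => ψ (j, a)) = α • v0 := by
  intro ψ μ hψ _ hμ
  refine exists_eq_smul_of_eigen_lt_gap (Equiv.addRight 1) (Equiv.subRight 1) L hv0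
    (mulVec_eq_zero_of_ker_toLin'_eq_span hker)
    (hL.sortedEig_one_mul_dotProduct_self_le (by omega) hv0 hker) hω.le hμ (Function.curry ψ)
    fun j => ?_
  have hblock : Function.curry (Lsupra *ᵥ ψ) j = μ • Function.curry ψ j := by rw [hψ]; rfl
  rw [← hblock, hLsupra, blockCirc_mulVec_curry hT]
  simp only [Equiv.coe_addRight, Equiv.subRight_apply, add_mulVec, smul_mulVec, neg_mulVec,
    one_mulVec]
  abel
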